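/- arXiv:2407.21755 — 2 statements merged into one kernel-verified Lean document; each statement's English description precedes it below -/
import Mathlib

section
/- Let n and k be positive integers with k not dividing n, and write n = mk + j with 1 ≤ j ≤ k - 1. Then the excedance enumerator over mod-k-alternating permutations satisfies ∑_{π ∈ MP_{n,1}^k} t^{exc(π)} = A_{m+1}(t)^j · A_m(t)^{k-j} as polynomials in ℚ[t]. -/
/-!
Positions and values of `π ∈ MP n k 1` have the same residue mod `k`, so `π` amounts to a family
of permutations of the residue classes, and its excedances are those of the members of the family
(each class keeps the order of `ℕ`). A class has `m + 1` elements if its residue is below `j` and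
`m` otherwise, so the enumerator factors into excedance enumerators of `S_{m+1}` and `S_m`.

These enumerators are the Eulerian polynomials. Inserting `m + 1` into the cycles of `τ ∈ S_m`
(`τ ↦ τ * (p m+1)`) and inserting the value `m + 1` at position `q` of the one-line word of `τ`
are both bijections `S_m × [m+1] → S_{m+1}`; in either case the statistic (`exc`, resp. `des`)
keeps its value `d` for exactly `d + 1` of the `m + 1` choices and grows by one otherwise. So both
generating functions obey `A_{m+1} = (1 + m t) A_m + t (1 - t) A_m'`.
-/

open Polynomial Finset

/-- Number of excedances of a permutation of `Fin n` (indices where `π i > i`). -/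
def exc {n : ℕ} (π : Equiv.Perm (Fin n)) : ℕ :=
  (Finset.univ.filter fun i => π i > i).card

/-- Mod-k-alternating permutations of size `n` starting with remainder `r` (mod k):
permutations with `π i - i ≡ r - 1 (mod k)` for all `i`. -/
def MP (n k r : ℕ) : Finset (Equiv.Perm (Fin n)) :=
  Finset.univ.filter fun π => ∀ i : Fin n, ((π i : ℤ) - (i : ℤ)) ≡ ((r : ℤ) - 1) [ZMOD (k : ℤ)]

/-- Number of descents of a permutation of `Fin n`: indices `i` with `i + 1 < n` and
`π (i+1) < π i`. -/
def des {n : ℕ} (π : Equiv.Perm (Fin n)) : ℕ :=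
  (Finset.univ.filter fun i : Fin n =>
    (i : ℕ) + 1 < n ∧ π ⟨((i : ℕ) + 1) % n, Nat.mod_lt _ i.pos⟩ < π i).card

/-- The Eulerian polynomial `A_m(t) = ∑_{π ∈ S_m} t^(des π)`. -/
noncomputable def Eulerian (m : ℕ) : ℚ[X] :=
  ∑ π : Equiv.Perm (Fin m), X ^ des π

open Equiv

noncomputable def eulerianStep (m : ℕ) : ℚ[X] →ₗ[ℚ] ℚ[X] :=
  LinearMap.mulLeft ℚ (1 + (m : ℚ[X]) * X) + LinearMap.mulLeft ℚ (X * (1 - X)) ∘ₗ derivative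

lemma eulerianStep_X_pow {m d : ℕ} (hd : d ≤ m) :
    eulerianStep m (X ^ d) = (d + 1) • X ^ d + (m - d) • X ^ (d + 1) := by
  rcases d with _ | d
  · simp [eulerianStep]
  · simp only [eulerianStep, LinearMap.add_apply, LinearMap.mulLeft_apply, LinearMap.coe_comp,
      Function.comp_apply, derivative_X_pow_succ, map_add, map_one, map_natCast, nsmul_eq_mul]
    push_cast [Nat.cast_sub hd]
    ring

lemma sum_X_pow_ite_mem {m d : ℕ} (S : Finset (Fin (m + 1))) (hS : S.card = d + 1) :
    ∑ q, (X : ℚ[X]) ^ (if q ∈ S then d else d + 1) = eulerianStep m (X ^ d) := by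
  have hSc : Sᶜ.card = m - d := by rw [Finset.card_compl, hS, Fintype.card_fin]; omega
  have hdm : d ≤ m := by
    have := S.card_le_univ
    rw [Fintype.card_fin] at this
    omega
  simp only [apply_ite (X ^ ·)]
  rw [Finset.sum_ite, Finset.sum_const, Finset.sum_const, Finset.filter_not,
    Finset.filter_mem_eq_inter, Finset.univ_inter, ← Finset.compl_eq_univ_sdiff, hS, hSc,
    eulerianStep_X_pow hdm]

namespace Equiv.Perm

def extendLast {m : ℕ} (τ : Perm (Fin m)) : Perm (Fin (m + 1)) :=
  finSuccEquivLast.symm.permCongr τ.optionCongr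

@[simp] lemma extendLast_castSucc {m : ℕ} (τ : Perm (Fin m)) (i : Fin m) :
    extendLast τ i.castSucc = (τ i).castSucc := by
  simp [extendLast, permCongr_apply]

@[simp] lemma extendLast_last {m : ℕ} (τ : Perm (Fin m)) :
    extendLast τ (Fin.last m) = Fin.last m := by
  simp [extendLast, permCongr_apply]

lemma extendLast_injective {m : ℕ} : Function.Injective (extendLast (m := m)) :=
  fun _ _ h => optionCongr_injective (finSuccEquivLast.symm.permCongr.injective h)

end Equiv.Perm

open Equiv.Perm

lemma bijective_extendLast_mul {m : ℕ} (f : Fin (m + 1) → Perm (Fin (m + 1)))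
    (hf : ∀ p, f p p = Fin.last m) :
    Function.Bijective (fun x : Perm (Fin m) × Fin (m + 1) => extendLast x.1 * f x.2) := by
  refine (Fintype.bijective_iff_injective_and_card _).2 ⟨?_, ?_⟩
  · rintro ⟨τ, p⟩ ⟨τ', p'⟩ h
    have hlast : ∀ τ p, (extendLast τ * f p : Perm (Fin (m + 1))) p = Fin.last m := by
      simp [Perm.mul_apply, hf]
    obtain rfl : p = p' := (extendLast τ' * f p').injective <| by
      simp only at h
      rw [hlast τ' p', ← h, hlast]
    exact Prod.ext (extendLast_injective (mul_right_cancel h)) rfl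
  · simp [Fintype.card_perm, Nat.factorial_succ, mul_comm]

lemma sum_X_pow_eq_eulerianStep {m : ℕ} (f : Fin (m + 1) → Perm (Fin (m + 1)))
    (hf : ∀ p, f p p = Fin.last m) (s : Perm (Fin (m + 1)) → ℕ) (t : Perm (Fin m) → ℕ)
    (S : Perm (Fin m) → Finset (Fin (m + 1))) (hS : ∀ τ, (S τ).card = t τ + 1)
    (hs : ∀ τ p, s (extendLast τ * f p) = if p ∈ S τ then t τ else t τ + 1) :
    ∑ σ, (X : ℚ[X]) ^ s σ = eulerianStep m (∑ τ, X ^ t τ) := by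
  rw [← Fintype.sum_bijective _ (bijective_extendLast_mul f hf) _ _ fun _ => rfl,
    Fintype.sum_prod_type, map_sum]
  simp only [hs, sum_X_pow_ite_mem _ (hS _)]

section Excedances

variable {α : Type*} [Fintype α] [LinearOrder α]

def excedances (σ : Perm α) : Finset α := {a | a < σ a}

@[simp] lemma mem_excedances {σ : Perm α} {a : α} : a ∈ excedances σ ↔ a < σ a := by
  simp [excedances]

lemma exc_eq_card_excedances {n : ℕ} (σ : Perm (Fin n)) : exc σ = (excedances σ).card := rfl

end Excedances

lemma excedances_extendLast {m : ℕ} (τ : Perm (Fin m)) :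
    excedances (extendLast τ) = (excedances τ).map Fin.castSuccEmb := by
  ext y
  cases y using Fin.lastCases <;> simp

lemma excedances_extendLast_mul_swap {m : ℕ} (τ : Perm (Fin m)) (u : Fin m) :
    excedances (extendLast τ * swap u.castSucc (Fin.last m))
      = (insert u (excedances τ)).map Fin.castSuccEmb := by
  ext y
  cases y using Fin.lastCases with
  | last =>
    simpa [Perm.mul_apply] using
      iff_of_false (not_lt.2 (Fin.le_last _)) (Fin.castSucc_lt_last u).ne'
  | cast x =>
    by_cases hx : x = u
    · simp [Perm.mul_apply, hx, Fin.castSucc_lt_last]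
    · simp [Perm.mul_apply, hx, swap_apply_of_ne_of_ne, Fin.castSucc_ne_last]

lemma exc_extendLast_mul_swap {m : ℕ} (τ : Perm (Fin m)) (p : Fin (m + 1)) :
    exc (extendLast τ * swap p (Fin.last m))
      = if p ∈ insert (Fin.last m) ((excedances τ).map Fin.castSuccEmb) then exc τ
        else exc τ + 1 := by
  cases p using Fin.lastCases with
  | last => simp [← Perm.one_def, exc_eq_card_excedances, excedances_extendLast]
  | cast u =>
    rw [exc_eq_card_excedances, excedances_extendLast_mul_swap, Finset.card_map,
      Finset.card_insert_eq_ite]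
    simp [exc_eq_card_excedances, Fin.castSucc_ne_last]

lemma sum_X_pow_exc_succ (m : ℕ) :
    ∑ σ : Perm (Fin (m + 1)), (X : ℚ[X]) ^ exc σ
      = eulerianStep m (∑ τ : Perm (Fin m), X ^ exc τ) := by
  refine sum_X_pow_eq_eulerianStep (fun p => swap p (Fin.last m)) (fun p => swap_apply_left _ _)
    exc exc _ (fun τ => ?_) exc_extendLast_mul_swap
  rw [Finset.card_insert_of_notMem (by simp [Fin.castSucc_ne_last]), Finset.card_map,
    exc_eq_card_excedances]

def descents {n : ℕ} (σ : Perm (Fin n)) : Finset (Fin n) :=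
  {i | ∃ j : Fin n, (j : ℕ) = i + 1 ∧ σ j < σ i}

lemma mem_descents {n : ℕ} {σ : Perm (Fin n)} {i : Fin n} :
    i ∈ descents σ ↔ ∃ j : Fin n, (j : ℕ) = i + 1 ∧ σ j < σ i := by
  simp [descents]

lemma des_eq_card_descents {n : ℕ} (σ : Perm (Fin n)) : des σ = (descents σ).card := by
  refine congrArg Finset.card (Finset.filter_congr fun i _ => ⟨fun ⟨hi, hlt⟩ => ⟨_, ?_, hlt⟩, ?_⟩)
  · simp [Nat.mod_eq_of_lt hi]
  · rintro ⟨j, hj, hlt⟩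
    have hi : (i : ℕ) + 1 < n := hj ▸ j.isLt
    obtain rfl : j = ⟨(i + 1) % n, Nat.mod_lt _ i.pos⟩ :=
      Fin.ext (by simp [hj, Nat.mod_eq_of_lt hi])
    exact ⟨hi, hlt⟩

lemma Fin.val_succAbove_eq_val_succAbove_add_one_iff {m : ℕ} (q : Fin (m + 1)) (x y : Fin m) :
    ((q.succAbove y : ℕ) = q.succAbove x + 1) ↔ ((y : ℕ) = x + 1 ∧ (q : ℕ) ≠ x + 1) := by
  simp only [Fin.succAbove, Fin.lt_def]
  split_ifs <;> simp only [Fin.val_castSucc, Fin.val_succ] at * <;> omega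

/-- `extendLast τ * q.moveToLast` is the word of `τ` with a new maximum inserted at position `q`. -/
def Fin.moveToLast {m : ℕ} (q : Fin (m + 1)) : Perm (Fin (m + 1)) :=
  (finSuccEquiv' q).trans finSuccEquivLast.symm

@[simp] lemma Fin.moveToLast_self {m : ℕ} (q : Fin (m + 1)) : q.moveToLast q = Fin.last m := by
  simp [Fin.moveToLast]

@[simp] lemma Fin.moveToLast_succAbove {m : ℕ} (q : Fin (m + 1)) (x : Fin m) :
    q.moveToLast (q.succAbove x) = x.castSucc := by
  simp [Fin.moveToLast]

section InsertMax

variable {m : ℕ} (τ : Perm (Fin m)) (q : Fin (m + 1))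

lemma self_mem_descents_extendLast_mul_moveToLast :
    q ∈ descents (extendLast τ * q.moveToLast) ↔ q ≠ Fin.last m := by
  rw [mem_descents]
  constructor
  · rintro ⟨j, hj, -⟩ rfl
    have := j.isLt
    simp only [Fin.val_last] at hj
    omega
  · intro hq
    refine ⟨⟨q + 1, by simpa using Fin.val_lt_last hq⟩, rfl, ?_⟩
    have hself : (extendLast τ * q.moveToLast) q = Fin.last m := by simp [Perm.mul_apply]
    refine hself ▸ lt_of_le_of_ne (Fin.le_last _) fun h => ?_
    simpa [Fin.ext_iff] using (extendLast τ * q.moveToLast).injective (h.trans hself.symm)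

lemma succAbove_mem_descents_extendLast_mul_moveToLast (x : Fin m) :
    q.succAbove x ∈ descents (extendLast τ * q.moveToLast) ↔ x ∈ descents τ ∧ x.succ ≠ q := by
  simp only [mem_descents]
  constructor
  · rintro ⟨j, hj, hlt⟩
    cases j using Fin.succAboveCases q with
    | x =>
      simp only [Perm.mul_apply, Fin.moveToLast_self, extendLast_last] at hlt
      exact absurd hlt (not_lt.2 (Fin.le_last _))
    | p y =>
      rw [Fin.val_succAbove_eq_val_succAbove_add_one_iff] at hj
      refine ⟨⟨y, hj.1, by simpa [Perm.mul_apply] using hlt⟩, fun h => hj.2 (by simp [← h])⟩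
  · rintro ⟨⟨y, hy, hlt⟩, hq⟩
    refine ⟨q.succAbove y, (Fin.val_succAbove_eq_val_succAbove_add_one_iff q x y).2
      ⟨hy, fun h => hq (Fin.ext (by simp [h]))⟩, by simpa [Perm.mul_apply] using hlt⟩

end InsertMax

lemma Fin.card_filter_univ_succAbove {n : ℕ} (p : Fin (n + 1) → Prop) [DecidablePred p]
    (q : Fin (n + 1)) : #{x | p x} = ite (p q) 1 0 + #{x | p (q.succAbove x)} := by
  simp only [Finset.card_filter]
  exact Fin.sum_univ_succAbove _ q

lemma card_descents_extendLast_mul_moveToLast {m : ℕ} (τ : Perm (Fin m)) (q : Fin (m + 1)) :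
    #(descents (extendLast τ * q.moveToLast))
      = ite (q ≠ Fin.last m) 1 0 + #(((descents τ).map (Fin.succEmb m)).erase q) := by
  rw [← Finset.filter_ne', Finset.filter_map, Finset.card_map]
  calc #(descents (extendLast τ * q.moveToLast))
      _ = #{y | y ∈ descents (extendLast τ * q.moveToLast)} := by
        rw [Finset.filter_mem_eq_inter, Finset.univ_inter]
      _ = _ := by
        rw [Fin.card_filter_univ_succAbove _ q]
        simp only [self_mem_descents_extendLast_mul_moveToLast,
          succAbove_mem_descents_extendLast_mul_moveToLast]
        congr 2
        ext x
        rw [Finset.mem_filter, Finset.mem_filter]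
        simp

lemma last_notMem_map_succEmb_descents {m : ℕ} (τ : Perm (Fin m)) :
    Fin.last m ∉ (descents τ).map (Fin.succEmb m) := by
  rw [Finset.mem_map]
  rintro ⟨x, hx, hxq⟩
  obtain ⟨j, hj, -⟩ := mem_descents.1 hx
  have := j.isLt
  simp only [Fin.coe_succEmb, Fin.ext_iff, Fin.val_succ, Fin.val_last] at hxq
  omega

lemma des_extendLast_mul_moveToLast {m : ℕ} (τ : Perm (Fin m)) (q : Fin (m + 1)) :
    des (extendLast τ * q.moveToLast)
      = if q ∈ insert (Fin.last m) ((descents τ).map (Fin.succEmb m)) then des τ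
        else des τ + 1 := by
  rw [des_eq_card_descents, des_eq_card_descents, card_descents_extendLast_mul_moveToLast,
    Finset.card_erase_eq_ite, Finset.card_map]
  simp only [Finset.mem_insert]
  by_cases hq : q = Fin.last m
  · subst hq
    simp [last_notMem_map_succEmb_descents τ]
  · by_cases hD : q ∈ (descents τ).map (Fin.succEmb m)
    · have := Finset.card_pos.2 ⟨q, hD⟩
      simp only [Finset.card_map] at this
      simp only [ne_eq, hq, not_false_eq_true, ↓reduceIte, hD, or_true]
      omega
    · simp [hq, hD, add_comm]

lemma sum_X_pow_des_succ (m : ℕ) :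
    ∑ σ : Perm (Fin (m + 1)), (X : ℚ[X]) ^ des σ
      = eulerianStep m (∑ τ : Perm (Fin m), X ^ des τ) := by
  refine sum_X_pow_eq_eulerianStep Fin.moveToLast Fin.moveToLast_self des des _ (fun τ => ?_)
    des_extendLast_mul_moveToLast
  rw [Finset.card_insert_of_notMem (last_notMem_map_succEmb_descents τ), Finset.card_map,
    des_eq_card_descents]

theorem sum_X_pow_exc_eq_eulerian (m : ℕ) :
    ∑ σ : Perm (Fin m), (X : ℚ[X]) ^ exc σ = Eulerian m := by
  induction m with
  | zero => rfl
  | succ m ih => rw [sum_X_pow_exc_succ, ih, Eulerian, Eulerian, sum_X_pow_des_succ]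

section Fiberwise

variable {α ι : Type*} [Fintype α] [LinearOrder α] [Fintype ι] [DecidableEq ι] (f : α → ι)

def fiberwisePermEquiv : {σ : Perm α // ∀ a, f (σ a) = f a} ≃ ∀ i, Perm {a // f a = i} where
  toFun σ i := σ.1.subtypePerm fun a => by rw [σ.2 a]
  invFun τ := ⟨DomMulAct.stabilizerEquiv_invFun_aux τ, DomMulAct.comp_stabilizerEquiv_invFun τ⟩
  left_inv σ := by ext a; rfl
  right_inv τ := by ext i a; exact DomMulAct.stabilizerEquiv_invFun_eq τ a.2

lemma card_excedances_fiberwisePermEquiv_symm (τ : ∀ i, Perm {a // f a = i}) :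
    #(excedances ((fiberwisePermEquiv f).symm τ).1) = ∑ i, #(excedances (τ i)) := by
  simp only [excedances, Finset.card_filter]
  rw [← Fintype.sum_fiberwise f]
  refine Finset.sum_congr rfl fun i _ => Finset.sum_congr rfl fun a _ => ?_
  have : ((fiberwisePermEquiv f).symm τ).1 a = τ i a :=
    DomMulAct.stabilizerEquiv_invFun_eq τ a.2
  simp only [this, Subtype.coe_lt_coe]

lemma sum_pow_card_excedances_fiberwise [DecidableEq α] {R : Type*} [CommSemiring R] (x : R)
    (s : Finset (Perm α)) (hs : ∀ σ, σ ∈ s ↔ ∀ a, f (σ a) = f a) :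
    ∑ σ ∈ s, x ^ #(excedances σ) = ∏ i, ∑ τ : Perm {a // f a = i}, x ^ #(excedances τ) := by
  rw [Finset.prod_univ_sum, Fintype.piFinset_univ, Finset.sum_subtype s hs]
  refine Fintype.sum_equiv (fiberwisePermEquiv f) _ _ fun σ => ?_
  rw [Finset.prod_pow_eq_pow_sum, ← card_excedances_fiberwisePermEquiv_symm, Equiv.symm_apply_apply]

lemma card_excedances_permCongr {β : Type*} [Fintype β] [LinearOrder β] (e : α ≃o β)
    (σ : Perm α) : #(excedances (e.toEquiv.permCongr σ)) = #(excedances σ) := by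
  rw [← Finset.card_map e.toEquiv.toEmbedding]
  congr 1
  ext b
  simp [permCongr_apply, ← e.symm.lt_symm_apply]

lemma sum_pow_card_excedances_eq_eulerian [DecidableEq α] :
    ∑ τ : Perm α, (X : ℚ[X]) ^ #(excedances τ) = Eulerian (Fintype.card α) := by
  rw [← sum_X_pow_exc_eq_eulerian]
  refine Fintype.sum_equiv (Fintype.orderIsoFinOfCardEq α rfl).symm.toEquiv.permCongr _ _
    fun σ => ?_
  rw [exc_eq_card_excedances, card_excedances_permCongr]

end Fiberwise

section Residues

variable {n k : ℕ}

def residue (hk : 0 < k) (i : Fin n) : Fin k := ⟨i % k, Nat.mod_lt _ hk⟩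

lemma mem_MP_one_iff (hk : 0 < k) {π : Perm (Fin n)} :
    π ∈ MP n k 1 ↔ ∀ i, residue hk (π i) = residue hk i := by
  rw [MP, Finset.mem_filter_univ]
  refine forall_congr' fun i => ?_
  rw [Nat.cast_one, sub_self, Int.modEq_zero_iff_dvd, ← Int.modEq_iff_dvd, Int.natCast_modEq_iff,
    residue, residue, Fin.ext_iff]
  exact eq_comm

lemma card_residue_eq (hk : 0 < k) (r : Fin k) :
    Fintype.card {i : Fin n // residue hk i = r} = n / k + if (r : ℕ) < n % k then 1 else 0 := by
  have hcount := Nat.count_modEq_card n hk r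
  rw [Nat.mod_eq_of_lt r.isLt, Nat.count_eq_card_filter_range] at hcount
  rw [← hcount, Fintype.card_subtype, ← Finset.card_map Fin.valEmbedding]
  congr 1
  ext x
  rw [Finset.mem_map, Finset.mem_filter, Finset.mem_range]
  simp only [Finset.mem_filter_univ, Fin.valEmbedding_apply, residue, Fin.ext_iff, Nat.ModEq,
    Nat.mod_eq_of_lt r.isLt]
  constructor
  · rintro ⟨i, hi, rfl⟩
    exact ⟨i.isLt, hi⟩
  · rintro ⟨hx, hxr⟩
    exact ⟨⟨x, hx⟩, hxr, rfl⟩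

theorem sum_X_pow_exc_MP_one (hk : 0 < k) :
    ∑ π ∈ MP n k 1, (X : ℚ[X]) ^ exc π
      = ∏ r ∈ Finset.range k, Eulerian (n / k + if r < n % k then 1 else 0) := by
  simp only [exc_eq_card_excedances]
  rw [sum_pow_card_excedances_fiberwise (residue hk) X _ fun π => mem_MP_one_iff hk,
    ← Fin.prod_univ_eq_prod_range]
  simp only [sum_pow_card_excedances_eq_eulerian, card_residue_eq]

end Residues

theorem stmt9_general (n k m j : ℕ) (hk : 0 < k) (hj2 : j ≤ k - 1) (hmj : n = m * k + j) :
    ∑ π ∈ MP n k 1, (X : ℚ[X]) ^ exc π = (Eulerian (m + 1)) ^ j * (Eulerian m) ^ (k - j) := by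
  have hjk : j < k := by omega
  have hdiv : n / k = m := by
    rw [hmj, Nat.add_comm, Nat.add_mul_div_right _ _ hk, Nat.div_eq_of_lt hjk, zero_add]
  have hmod : n % k = j := by
    rw [hmj, Nat.add_comm, Nat.add_mul_mod_self_right, Nat.mod_eq_of_lt hjk]
  rw [sum_X_pow_exc_MP_one hk, hdiv, hmod, ← Finset.prod_range_mul_prod_Ico _ hjk.le,
    Finset.prod_eq_pow_card fun r hr => by rw [if_pos (Finset.mem_range.1 hr)],
    Finset.prod_eq_pow_card fun r hr => by rw [if_neg (Finset.mem_Ico.1 hr).1.not_gt, add_zero],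
    Finset.card_range, Nat.card_Ico]

theorem stmt9 (n k m j : ℕ) (hn : 0 < n) (hk : 0 < k) (hnd : ¬ k ∣ n)
    (hj1 : 1 ≤ j) (hj2 : j ≤ k - 1) (hmj : n = m * k + j) :
    ∑ π ∈ MP n k 1, (X : ℚ[X]) ^ exc π = (Eulerian (m + 1)) ^ j * (Eulerian m) ^ (k - j) :=
  stmt9_general n k m j hk hj2 hmj
end

section
/- For every positive integer n, ∑_{π ∈ S_n} sgn(π) · t^{exc(π)} = (1 - t)^{n-1} as polynomials in ℚ[t], where the sum is over all permutations of {1,...,n}. -/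
/-! The signed excedance enumerator `∑ σ, sgn σ · x ^ exc σ` is the determinant of the matrix
with `x` strictly below the diagonal and `1` on and above it, since the entry in row `σ i`,
column `i` is `x` exactly when `i` is an excedance of `σ`. Subtracting column `1` from column `0`
leaves the single entry `x - 1` in column `0`, whose minor is the same matrix one size smaller;
hence the determinant drops by a factor `1 - x` with each size from `1` on. -/

open Polynomial Finset

section ExcMatrix

variable {R : Type*} [CommRing R]

def excMatrix (x : R) (n : ℕ) : Matrix (Fin n) (Fin n) R :=
  Matrix.of fun i j => if j < i then x else 1

theorem sum_sign_mul_pow_exc_eq_det (x : R) (n : ℕ) :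
    ∑ σ : Equiv.Perm (Fin n), (Equiv.Perm.sign σ : ℤ) * x ^ exc σ = (excMatrix x n).det := by
  refine ((Matrix.det_apply' _).trans (sum_congr rfl fun σ _ => congrArg _ ?_)).symm
  simp only [excMatrix, Matrix.of_apply, prod_ite, prod_const, one_pow, mul_one]
  rfl

theorem det_excMatrix_succ_succ (x : R) (m : ℕ) :
    (excMatrix x (m + 2)).det = (1 - x) * (excMatrix x (m + 1)).det := by
  set A := excMatrix x (m + 2)
  set B := A.updateCol 0 fun k => A k 0 + (-1 : R) • A k 1
  have hB_det : B.det = A.det := Matrix.det_updateCol_add_smul_self A zero_ne_one (-1)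
  have hB_col_zero : ∀ i, B i 0 = if i = 1 then x - 1 else 0 := by
    intro i
    simp only [B, A, excMatrix, Matrix.updateCol_self, Matrix.of_apply, smul_eq_mul]
    simp only [Fin.lt_def, Fin.ext_iff, Fin.val_zero, Fin.val_one]
    split_ifs <;> first | omega | ring
  have hB_minor : B.submatrix (Fin.succAbove 1) Fin.succ = excMatrix x (m + 1) := by
    ext i j
    cases i using Fin.cases <;> simp [B, A, excMatrix]
  rw [← hB_det, Matrix.det_succ_column_zero,
    Fintype.sum_eq_single 1 fun i hi => by simp [hB_col_zero, hi], hB_col_zero, if_pos rfl,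
    hB_minor]
  simp

theorem det_excMatrix (x : R) (n : ℕ) : (excMatrix x n).det = (1 - x) ^ (n - 1) := by
  induction n with
  | zero => simp
  | succ n ih =>
    cases n with
    | zero => simp [excMatrix]
    | succ m => rw [det_excMatrix_succ_succ, ih, ← pow_succ']; rfl

end ExcMatrix

theorem stmt17_general (n : ℕ) :
    ∑ π : Equiv.Perm (Fin n), ((Equiv.Perm.sign π : ℤ) : ℚ[X]) * X ^ exc π
      = (1 - X) ^ (n - 1) := by
  rw [sum_sign_mul_pow_exc_eq_det, det_excMatrix]

theorem stmt17 (n : ℕ) (hn : 0 < n) :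
    ∑ π : Equiv.Perm (Fin n), ((Equiv.Perm.sign π : ℤ) : ℚ[X]) * X ^ exc π
      = (1 - X) ^ (n - 1) :=
  stmt17_general n
end
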